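/- arXiv:2504.20417 — 5 statements merged into one kernel-verified Lean document; each statement's English description precedes it below -/
import Mathlib

section
/- Let K and E be nonempty finite types, let q : K × K → ℝ be nonnegative with Σ_{a,b} q(a,b) = 1, and for each (a,b) let ρ_{a,b} be a positive semidefinite complex matrix indexed by E with trace 1. Set σ := Σ_{a,b} q(a,b)·ρ_{a,b}, ρ_real := Σ_{a,b} q(a,b)·(Δ_a ⊗ Δ_b ⊗ ρ_{a,b}), ρ_ideal := Σ_{a} (1/|K|)·(Δ_a ⊗ Δ_a ⊗ σ), ρ_real^{AE} := Σ_{a,b} q(a,b)·(Δ_a ⊗ ρ_{a,b}), and ρ_ideal^{AE} := Σ_{a} (1/|K|)·(Δ_a ⊗ σ). Then (1/2)·‖ρ_real − ρ_ideal‖₁ ≤ (1/2)·‖ρ_real^{AE} − ρ_ideal^{AE}‖₁ + Σ_{(a,b) : a ≠ b} q(a,b). (This is the key-length-conditioned form of the decomposition of the security parameter into a secrecy part and a correctness part, Proposition 1.) -/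
open scoped Kronecker ComplexOrder

/-- The trace norm `‖X‖₁ = tr √(Xᴴ X)` of a square complex matrix. -/
noncomputable def traceNorm {n : Type*} [Fintype n] [DecidableEq n] (X : Matrix n n ℂ) : ℝ :=
  (((Matrix.posSemidef_conjTranspose_mul_self X).1.eigenvectorUnitary.1 *
      Matrix.diagonal (((↑) : ℝ → ℂ) ∘ (Real.sqrt ∘ (Matrix.posSemidef_conjTranspose_mul_self X).1.eigenvalues)) *
      (star (Matrix.posSemidef_conjTranspose_mul_self X).1.eigenvectorUnitary : Matrix n n ℂ)).trace).re

/-! Both states are block diagonal in the classical registers, and the trace norm of a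
block-diagonal matrix is the sum of the trace norms of its blocks. An off-diagonal block
`(a, b)`, `a ≠ b`, of `ρ_real - ρ_ideal` is `q(a,b) ρ_{a,b}`, of trace norm `q(a,b)`. The diagonal
block `(a, a)` is the block `a` of `ρ_real^{AE} - ρ_ideal^{AE}` minus the positive matrix
`∑_{b ≠ a} q(a,b) ρ_{a,b}`, so it costs at most `∑_{b ≠ a} q(a,b)` more. The correctness term thus
appears twice, which the factor `1/2` absorbs. -/

namespace Matrix

open scoped MatrixOrder

section TraceNorm

variable {n : Type*} [Fintype n] [DecidableEq n]

theorem traceNorm_eq_re_trace_abs (X : Matrix n n ℂ) : traceNorm X = (CFC.abs X).trace.re := by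
  have hXX := posSemidef_conjTranspose_mul_self X
  rw [CFC.abs, star_eq_conjTranspose, CFC.sqrt_eq_cfc, cfc_nnreal_eq_real _ _ hXX.nonneg,
    hXX.1.cfc_eq]
  simp only [IsHermitian.cfc, Unitary.conjStarAlgAut_apply, traceNorm]
  congr 5
  funext i
  simp [Real.coe_sqrt, max_eq_left (hXX.eigenvalues_nonneg i)]

theorem PosSemidef.traceNorm_eq {A : Matrix n n ℂ} (hA : A.PosSemidef) :
    traceNorm A = A.trace.re := by
  rw [traceNorm_eq_re_trace_abs, CFC.abs_of_nonneg A hA.nonneg]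

theorem IsHermitian.traceNorm_eq {X : Matrix n n ℂ} (hX : X.IsHermitian) :
    traceNorm X = (X⁺).trace.re + (X⁻).trace.re := by
  rw [traceNorm_eq_re_trace_abs, ← CFC.posPart_add_negPart X hX.isSelfAdjoint, trace_add,
    Complex.add_re]

omit [DecidableEq n] in
theorem PosSemidef.re_trace_nonneg {A : Matrix n n ℂ} (hA : A.PosSemidef) : 0 ≤ A.trace.re :=
  (Complex.nonneg_iff.mp hA.trace_nonneg).1

theorem PosSemidef.re_trace_mul_nonneg {A B : Matrix n n ℂ} (hA : A.PosSemidef)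
    (hB : B.PosSemidef) : 0 ≤ (A * B).trace.re := by
  have hsB : (CFC.sqrt B)ᴴ = CFC.sqrt B := (CFC.sqrt_nonneg B).isSelfAdjoint
  have h := (hA.conjTranspose_mul_mul_same (CFC.sqrt B)).re_trace_nonneg
  rwa [hsB, trace_mul_comm, ← mul_assoc, CFC.sqrt_mul_sqrt_self B hB.nonneg,
    trace_mul_comm] at h

/- With `S = sgn X` one has `S X = |X|` and `-1 ≤ S ≤ 1`, so
`tr |X| = tr (S P) - tr (S Q) ≤ tr P + tr Q`. -/
theorem traceNorm_le_of_eq_sub {X P Q : Matrix n n ℂ} (hP : P.PosSemidef) (hQ : Q.PosSemidef)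
    (hX : X = P - Q) : traceNorm X ≤ P.trace.re + Q.trace.re := by
  have hXsa : IsSelfAdjoint X := hX ▸ (hP.1.sub hQ.1)
  have hcont (f : ℝ → ℝ) : ContinuousOn f (spectrum ℝ X) := X.finite_real_spectrum.continuousOn f
  set sgn : ℝ → ℝ := fun x => if 0 ≤ x then 1 else -1
  set S := cfc sgn X
  have hSX : S * X = CFC.abs X := by
    rw [CFC.abs_eq_cfc_norm X hXsa]
    conv_lhs => rw [← cfc_id' ℝ X, ← cfc_mul sgn _ X (hcont _) (hcont _)]
    refine cfc_congr fun x _ => ?_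
    by_cases hx : 0 ≤ x <;> simp [sgn, hx, abs_of_nonneg, abs_of_neg, not_le.mp]
  have hS_le_one : (1 - S).PosSemidef := by
    rw [← cfc_one ℝ X, ← cfc_sub (hf := hcont _) (hg := hcont _)]
    exact nonneg_iff_posSemidef.mp <| cfc_nonneg fun x _ => by
      by_cases hx : 0 ≤ x <;> norm_num [sgn, hx]
  have hneg_one_le_S : (1 + S).PosSemidef := by
    rw [← cfc_one ℝ X, ← cfc_add (hf := hcont _) (hg := hcont _)]
    exact nonneg_iff_posSemidef.mp <| cfc_nonneg fun x _ => by
      by_cases hx : 0 ≤ x <;> norm_num [sgn, hx]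
  have hSP := hS_le_one.re_trace_mul_nonneg hP
  have hSQ := hneg_one_le_S.re_trace_mul_nonneg hQ
  rw [sub_mul, one_mul, trace_sub, Complex.sub_re] at hSP
  rw [add_mul, one_mul, trace_add, Complex.add_re] at hSQ
  rw [traceNorm_eq_re_trace_abs, ← hSX, hX, mul_sub, trace_sub, Complex.sub_re]
  linarith

theorem traceNorm_sub_le_of_posSemidef {X R : Matrix n n ℂ} (hX : X.IsHermitian)
    (hR : R.PosSemidef) : traceNorm (X - R) ≤ traceNorm X + R.trace.re := by
  have hsplit : X - R = X⁺ - (X⁻ + R) := by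
    rw [← sub_sub, CFC.posPart_sub_negPart X hX.isSelfAdjoint]
  have hbound := traceNorm_le_of_eq_sub (nonneg_iff_posSemidef.mp (CFC.posPart_nonneg X))
    ((nonneg_iff_posSemidef.mp (CFC.negPart_nonneg X)).add hR) hsplit
  rw [trace_add, Complex.add_re] at hbound
  rw [hX.traceNorm_eq]
  linarith

theorem sum_traceNorm_smul_sub_ite_le {J : Type*} [Fintype J] [DecidableEq J] (a : J)
    {w : J → ℝ} (hw : ∀ b, 0 ≤ w b)
    {ρ : J → Matrix n n ℂ} (hρ : ∀ b, (ρ b).PosSemidef) (hρtr : ∀ b, (ρ b).trace = 1)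
    {τ : Matrix n n ℂ} (hτ : τ.IsHermitian) :
    ∑ b, traceNorm ((w b : ℂ) • ρ b - if a = b then τ else 0)
      ≤ traceNorm (∑ b, (w b : ℂ) • ρ b - τ) + 2 * ∑ b ∈ Finset.univ.erase a, w b := by
  have hwρ (b : J) : ((w b : ℂ) • ρ b).PosSemidef :=
    (hρ b).smul (Complex.zero_le_real.mpr (hw b))
  have htr (b : J) : ((w b : ℂ) • ρ b).trace.re = w b := by simp [trace_smul, hρtr]
  set R := ∑ b ∈ Finset.univ.erase a, (w b : ℂ) • ρ b
  have hR : R.PosSemidef := posSemidef_sum _ fun b _ => hwρ b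
  have hRtr : R.trace.re = ∑ b ∈ Finset.univ.erase a, w b := by
    simp only [R, trace_sum, Complex.re_sum, htr]
  have hdiag : (w a : ℂ) • ρ a - τ = (∑ b, (w b : ℂ) • ρ b - τ) - R := by
    rw [← Finset.add_sum_erase _ _ (Finset.mem_univ a)]; abel
  have hoff : ∑ b ∈ Finset.univ.erase a, traceNorm ((w b : ℂ) • ρ b - if a = b then τ else 0)
      = ∑ b ∈ Finset.univ.erase a, w b := by
    refine Finset.sum_congr rfl fun b hb => ?_
    rw [if_neg (Finset.ne_of_mem_erase hb).symm, sub_zero, (hwρ b).traceNorm_eq, htr]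
  have hX : (∑ b, (w b : ℂ) • ρ b - τ).IsHermitian :=
    (posSemidef_sum _ fun b _ => hwρ b).1.sub hτ
  have hmain := traceNorm_sub_le_of_posSemidef hX hR
  rw [← Finset.add_sum_erase _ _ (Finset.mem_univ a), hoff, if_pos rfl, hdiag]
  linarith

end TraceNorm

section BlockDiagonal

variable {l m n p : Type*}

theorem kronecker_sub {α : Type*} [NonUnitalNonAssocRing α] (A : Matrix l m α)
    (B₁ B₂ : Matrix n p α) : A ⊗ₖ (B₁ - B₂) = A ⊗ₖ B₁ - A ⊗ₖ B₂ := by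
  ext; simp [mul_sub]

theorem kronecker_sum {α ι : Type*} [NonUnitalNonAssocSemiring α] (A : Matrix l m α)
    (s : Finset ι) (B : ι → Matrix n p α) : A ⊗ₖ ∑ i ∈ s, B i = ∑ i ∈ s, A ⊗ₖ B i := by
  ext; simp [sum_apply, Finset.mul_sum]

variable [Fintype l] [DecidableEq l]

theorem sum_single_kronecker_sub {α : Type*} [Ring α] (A B : l → Matrix n n α) :
    ∑ a, single a a (1 : α) ⊗ₖ A a - ∑ a, single a a 1 ⊗ₖ B a
      = ∑ a, single a a 1 ⊗ₖ (A a - B a) := by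
  simp only [kronecker_sub, Finset.sum_sub_distrib]

variable [Fintype n]

theorem sum_single_kronecker_mul {α : Type*} [CommSemiring α] (A B : l → Matrix n n α) :
    (∑ a, single a a (1 : α) ⊗ₖ A a) * ∑ a, single a a 1 ⊗ₖ B a
      = ∑ a, single a a 1 ⊗ₖ (A a * B a) := by
  rw [Finset.sum_mul_sum]
  refine Finset.sum_congr rfl fun a _ => ?_
  rw [Finset.sum_eq_single a]
  · rw [← mul_kronecker_mul, single_mul_single_same, one_mul]
  · intro b _ hb
    rw [← mul_kronecker_mul, single_mul_single_of_ne (h := Ne.symm hb), zero_kronecker]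
  · simp

variable [DecidableEq n]

theorem abs_sum_single_kronecker (M : l → Matrix n n ℂ) :
    CFC.abs (∑ a, single a a (1 : ℂ) ⊗ₖ M a) = ∑ a, single a a 1 ⊗ₖ CFC.abs (M a) := by
  have hsingle (a : l) : (single a a (1 : ℂ)).PosSemidef := by
    rw [← diagonal_single]
    exact posSemidef_diagonal_iff.mpr fun i => by
      by_cases h : i = a <;> simp [h]
  have hY : 0 ≤ ∑ a, single a a (1 : ℂ) ⊗ₖ CFC.abs (M a) :=
    Finset.sum_nonneg fun a _ =>
      ((hsingle a).kronecker (nonneg_iff_posSemidef.mp (CFC.abs_nonneg (M a)))).nonneg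
  rw [CFC.abs, CFC.sqrt_eq_iff _ _ (star_mul_self_nonneg _) hY, star_eq_conjTranspose,
    conjTranspose_sum]
  simp only [conjTranspose_kronecker, conjTranspose_single, star_one, sum_single_kronecker_mul,
    CFC.abs_mul_abs, star_eq_conjTranspose]

theorem traceNorm_sum_single_kronecker (M : l → Matrix n n ℂ) :
    traceNorm (∑ a, single a a (1 : ℂ) ⊗ₖ M a) = ∑ a, traceNorm (M a) := by
  simp only [traceNorm_eq_re_trace_abs, abs_sum_single_kronecker, trace_sum, trace_kronecker,
    trace_single_eq_same, one_mul, Complex.re_sum]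

end BlockDiagonal

end Matrix

open Matrix

theorem statement0_general {K E : Type*} [Fintype K] [DecidableEq K]
    [Fintype E] [DecidableEq E]
    (q : K × K → ℝ) (hq : ∀ ab, 0 ≤ q ab)
    (ρ : K × K → Matrix E E ℂ)
    (hρ : ∀ ab, (ρ ab).PosSemidef) (hρtr : ∀ ab, (ρ ab).trace = 1) :
    (1 / 2) * traceNorm
        ((∑ ab, (q ab : ℂ) •
            ((Matrix.single ab.1 ab.1 (1 : ℂ) ⊗ₖ Matrix.single ab.2 ab.2 (1 : ℂ))
              ⊗ₖ ρ ab)) -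
          (∑ a, (1 / (Fintype.card K : ℂ)) •
            ((Matrix.single a a (1 : ℂ) ⊗ₖ Matrix.single a a (1 : ℂ))
              ⊗ₖ ∑ ab, (q ab : ℂ) • ρ ab)))
      ≤ (1 / 2) * traceNorm
            ((∑ ab, (q ab : ℂ) • (Matrix.single ab.1 ab.1 (1 : ℂ) ⊗ₖ ρ ab)) -
              (∑ a, (1 / (Fintype.card K : ℂ)) •
                (Matrix.single a a (1 : ℂ) ⊗ₖ ∑ ab, (q ab : ℂ) • ρ ab)))
          + ∑ ab ∈ Finset.univ.filter (fun ab : K × K => ab.1 ≠ ab.2), q ab := by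
  set c : ℂ := 1 / (Fintype.card K : ℂ)
  set σ := ∑ ab, (q ab : ℂ) • ρ ab
  have hc : 0 ≤ c := by simp [c]
  have hτ : (c • σ).IsHermitian :=
    ((posSemidef_sum _ fun ab _ => (hρ ab).smul (Complex.zero_le_real.mpr (hq ab))).smul hc).1
  have hreal :
      ∑ ab, (q ab : ℂ) • ((single ab.1 ab.1 (1 : ℂ) ⊗ₖ single ab.2 ab.2 (1 : ℂ)) ⊗ₖ ρ ab) =
        ∑ p, single p p (1 : ℂ) ⊗ₖ ((q p : ℂ) • ρ p) := by
    simp only [single_kronecker_single, mul_one, kronecker_smul]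
  have hideal : ∑ a, c • ((single a a (1 : ℂ) ⊗ₖ single a a (1 : ℂ)) ⊗ₖ σ)
      = ∑ p : K × K, single p p (1 : ℂ) ⊗ₖ (if p.1 = p.2 then c • σ else 0) := by
    simp [Fintype.sum_prod_type, single_kronecker_single, kronecker_smul, apply_ite]
  have hrealAE : ∑ ab, (q ab : ℂ) • (single ab.1 ab.1 (1 : ℂ) ⊗ₖ ρ ab)
      = ∑ a, single a a (1 : ℂ) ⊗ₖ ∑ b, (q (a, b) : ℂ) • ρ (a, b) := by
    simp only [Fintype.sum_prod_type, kronecker_sum, kronecker_smul]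
  have hidealAE : ∑ a : K, c • (single a a (1 : ℂ) ⊗ₖ σ)
      = ∑ a, single a a (1 : ℂ) ⊗ₖ (c • σ) := by
    simp only [kronecker_smul]
  have hoff : ∑ ab ∈ Finset.univ.filter (fun ab : K × K => ab.1 ≠ ab.2), q ab
      = ∑ a, ∑ b ∈ Finset.univ.erase a, q (a, b) := by
    simp only [Finset.sum_filter, Fintype.sum_prod_type, ← Finset.filter_ne, ne_eq]
  have hrows := Finset.sum_le_sum fun a (_ : a ∈ Finset.univ) =>
    sum_traceNorm_smul_sub_ite_le a (fun b => hq (a, b)) (fun b => hρ (a, b))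
      (fun b => hρtr (a, b)) hτ
  rw [hreal, hideal, hrealAE, hidealAE, sum_single_kronecker_sub, sum_single_kronecker_sub,
    traceNorm_sum_single_kronecker, traceNorm_sum_single_kronecker, Fintype.sum_prod_type, hoff]
  rw [Finset.sum_add_distrib, ← Finset.mul_sum] at hrows
  linarith

/-- **Proposition 1 (decomposition of the security parameter), key-length-conditioned form.**
The trace distance between the real state and the ideal state is bounded by the trace
distance between the corresponding Alice–Eve marginals (secrecy part) plus the probability
that Alice's and Bob's keys differ (correctness part). -/
theorem statement0 {K E : Type*} [Fintype K] [DecidableEq K] [Nonempty K]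
    [Fintype E] [DecidableEq E] [Nonempty E]
    (q : K × K → ℝ) (hq : ∀ ab, 0 ≤ q ab) (hq1 : ∑ ab, q ab = 1)
    (ρ : K × K → Matrix E E ℂ)
    (hρ : ∀ ab, (ρ ab).PosSemidef) (hρtr : ∀ ab, (ρ ab).trace = 1) :
    (1 / 2) * traceNorm
        ((∑ ab, (q ab : ℂ) •
            ((Matrix.single ab.1 ab.1 (1 : ℂ) ⊗ₖ Matrix.single ab.2 ab.2 (1 : ℂ))
              ⊗ₖ ρ ab)) -
          (∑ a, (1 / (Fintype.card K : ℂ)) •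
            ((Matrix.single a a (1 : ℂ) ⊗ₖ Matrix.single a a (1 : ℂ))
              ⊗ₖ ∑ ab, (q ab : ℂ) • ρ ab)))
      ≤ (1 / 2) * traceNorm
            ((∑ ab, (q ab : ℂ) • (Matrix.single ab.1 ab.1 (1 : ℂ) ⊗ₖ ρ ab)) -
              (∑ a, (1 / (Fintype.card K : ℂ)) •
                (Matrix.single a a (1 : ℂ) ⊗ₖ ∑ ab, (q ab : ℂ) • ρ ab)))
          + ∑ ab ∈ Finset.univ.filter (fun ab : K × K => ab.1 ≠ ab.2), q ab :=
  statement0_general q hq ρ hρ hρtr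
end

section
/- Let A and E be nonempty finite types, and let ρ be a positive semidefinite complex matrix indexed by A × E with trace 1. Let ρ_A := tr_E ρ and ρ_E := tr_A ρ denote its partial traces, i.e., ρ_A(a,a') = Σ_e ρ((a,e),(a',e)) and ρ_E(e,e') = Σ_a ρ((a,e),(a,e')). Then for every unit vector φ : A → ℂ, F(ρ, P_φ ⊗ ρ_E) ≥ (F(ρ_A, P_φ))², where P_φ := φ·φᴴ is the rank-one orthogonal projection onto φ and ⊗ is the Kronecker product. (Lemma 1 of the paper.) -/
open scoped Kronecker ComplexOrder

open Classical in
/-- The positive semidefinite square root of a positive semidefinite matrix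
(junk value `0` on matrices that are not positive semidefinite). -/
noncomputable def matSqrt {n : Type*} [Fintype n] [DecidableEq n]
    (A : Matrix n n ℂ) : Matrix n n ℂ :=
  if h : A.PosSemidef then
    h.1.eigenvectorUnitary.1 * Matrix.diagonal ((↑) ∘ (√·) ∘ h.1.eigenvalues) *
      (star h.1.eigenvectorUnitary : Matrix n n ℂ)
  else 0

/-- The fidelity `F(ρ,σ) = (tr √(√ρ · σ · √ρ))²` of two positive semidefinite matrices. -/
noncomputable def fidelity {n : Type*} [Fintype n] [DecidableEq n]
    (ρ σ : Matrix n n ℂ) : ℝ :=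
  (((matSqrt (matSqrt ρ * σ * matSqrt ρ)).trace).re) ^ 2

/-!
Write `V = φ ⊗ 1_E`, so that `P_φ ⊗ ρ_E = V ρ_E V†` and `F(ρ_A, P_φ) = tr Z` with `Z = V† ρ V`.
The identity `ρ_E - Z = ∑ₐ Kₐ† ρ Kₐ` with `Kₐ = (eₐ - φ̄ₐ φ) ⊗ 1_E` shows `Z ≤ ρ_E`.
Since `tr √(X†X) = tr √(XX†)` for rectangular `X`, applied twice,
`tr √(√ρ V ρ_E V† √ρ) = tr √(√Z ρ_E √Z)`, and operator monotonicity of the square root gives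
`√(√Z ρ_E √Z) ≥ √(√Z Z √Z) = Z`; taking traces and squaring yields the claim.
-/

open Matrix MatrixOrder Polynomial

lemma Matrix.trace_pow_succ_mul_comm {m n R : Type*} [Fintype m] [Fintype n] [DecidableEq m]
    [DecidableEq n] [CommSemiring R] (X : Matrix m n R) (Y : Matrix n m R) (k : ℕ) :
    ((Y * X) ^ (k + 1)).trace = ((X * Y) ^ (k + 1)).trace := by
  have h : ∀ k : ℕ, (Y * X) ^ k * Y = Y * (X * Y) ^ k := by
    intro k
    induction k with
    | zero => simp
    | succ k ih => simp only [pow_succ', Matrix.mul_assoc, ih]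
  rw [pow_succ, ← Matrix.mul_assoc, h, Matrix.mul_assoc, trace_mul_comm, Matrix.mul_assoc, pow_succ]

lemma Matrix.trace_aeval_mul_comm {m n S R : Type*} [Fintype m] [Fintype n] [DecidableEq m]
    [DecidableEq n] [CommSemiring S] [CommSemiring R] [Algebra S R] (X : Matrix m n R)
    (Y : Matrix n m R) {p : S[X]} (hp : p.coeff 0 = 0) :
    (aeval (Y * X) p).trace = (aeval (X * Y) p).trace := by
  simp only [aeval_eq_sum_range, trace_sum, trace_smul]
  refine Finset.sum_congr rfl fun k _ => ?_
  cases k with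
  | zero => simp [hp]
  | succ k => rw [trace_pow_succ_mul_comm]

lemma cfc_eq_aeval_interpolate {A : Type*} [Ring A] [StarRing A] [TopologicalSpace A]
    [Algebra ℝ A] [ContinuousFunctionalCalculus ℝ A IsSelfAdjoint] {a : A} (ha : IsSelfAdjoint a)
    (f : ℝ → ℝ) {s : Finset ℝ} (hs : spectrum ℝ a ⊆ s) :
    cfc f a = aeval a (Lagrange.interpolate s id f) := by
  rw [← cfc_polynomial _ a]
  exact cfc_congr fun x hx => (Lagrange.eval_interpolate_at_node f (Set.injOn_id _) (hs hx)).symm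

-- On the union of both spectra and `0`, `f` is an interpolating polynomial without constant term.
lemma Matrix.trace_cfc_conjTranspose_mul_self {m n : Type*} [Fintype m] [Fintype n]
    [DecidableEq m] [DecidableEq n] (X : Matrix m n ℂ) {f : ℝ → ℝ} (hf : f 0 = 0) :
    (cfc f (Xᴴ * X)).trace = (cfc f (X * Xᴴ)).trace := by
  classical
  set s : Finset ℝ := insert 0
    ((Xᴴ * X).finite_real_spectrum.toFinset ∪ (X * Xᴴ).finite_real_spectrum.toFinset)
  rw [cfc_eq_aeval_interpolate (isHermitian_conjTranspose_mul_self X) f (s := s)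
      (fun x hx => by simp [s, hx]),
    cfc_eq_aeval_interpolate (isHermitian_mul_conjTranspose_self X) f (s := s)
      (fun x hx => by simp [s, hx])]
  refine trace_aeval_mul_comm X Xᴴ ?_
  rw [coeff_zero_eq_eval_zero]
  exact (Lagrange.eval_interpolate_at_node f (Set.injOn_id _) (Finset.mem_insert_self 0 _)).trans hf

lemma Matrix.trace_sqrt_conjTranspose_mul_self {m n : Type*} [Fintype m] [Fintype n]
    [DecidableEq m] [DecidableEq n] (X : Matrix m n ℂ) :
    (CFC.sqrt (Xᴴ * X)).trace = (CFC.sqrt (X * Xᴴ)).trace := by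
  rw [CFC.sqrt_eq_real_sqrt _ (posSemidef_conjTranspose_mul_self X).nonneg,
    CFC.sqrt_eq_real_sqrt _ (posSemidef_self_mul_conjTranspose X).nonneg,
    cfcₙ_eq_cfc (hf0 := by simp), cfcₙ_eq_cfc (hf0 := by simp)]
  exact trace_cfc_conjTranspose_mul_self X Real.sqrt_zero

section Fidelity

variable {ι : Type*} [Fintype ι]

lemma Matrix.re_trace_le_re_trace {M N : Matrix ι ι ℂ} (h : M ≤ N) : M.trace.re ≤ N.trace.re :=
  (Complex.le_def.mp ((tracePositiveLinearMap ι ℝ ℂ).monotone h)).1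

variable [DecidableEq ι]

lemma matSqrt_eq_sqrt {M : Matrix ι ι ℂ} (hM : M.PosSemidef) : matSqrt M = CFC.sqrt M := by
  have h0 : 0 ≤ M := hM.nonneg
  rw [CFC.sqrt_eq_real_sqrt M, cfcₙ_eq_cfc (hf0 := by simp), hM.1.cfc_eq, IsHermitian.cfc,
    Unitary.conjStarAlgAut_apply, matSqrt, dif_pos hM]
  rfl

-- The L2 operator norm provides the C⋆-algebra structure that `CFC.sqrt_le_sqrt` needs.
open scoped Matrix.Norms.L2Operator in
lemma sq_re_trace_le_fidelity {κ : Type*} [Fintype κ] [DecidableEq κ] {ρ : Matrix ι ι ℂ}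
    (hρ : ρ.PosSemidef) (V : Matrix ι κ ℂ) {τ : Matrix κ κ ℂ} (hτ : Vᴴ * ρ * V ≤ τ) :
    (Vᴴ * ρ * V).trace.re ^ 2 ≤ fidelity ρ (V * τ * Vᴴ) := by
  set Z := Vᴴ * ρ * V
  have hZ : 0 ≤ Z := (hρ.conjTranspose_mul_mul_same V).nonneg
  have hτ0 : 0 ≤ τ := hZ.trans hτ
  set s := CFC.sqrt ρ
  set r := CFC.sqrt τ
  set t := CFC.sqrt Z
  have hs : sᴴ = s := (CFC.sqrt_nonneg ρ).isSelfAdjoint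
  have hr : rᴴ = r := (CFC.sqrt_nonneg τ).isSelfAdjoint
  have ht : tᴴ = t := (CFC.sqrt_nonneg Z).isSelfAdjoint
  have hss : s * s = ρ := CFC.sqrt_mul_sqrt_self ρ hρ.nonneg
  have hrr : r * r = τ := CFC.sqrt_mul_sqrt_self τ hτ0
  have htt : t * t = Z := CFC.sqrt_mul_sqrt_self Z hZ
  set Y := r * Vᴴ * s
  have hσ : s * (V * τ * Vᴴ) * s = Yᴴ * Y := by
    simp only [Y, conjTranspose_mul, conjTranspose_conjTranspose, hs, hr, ← hrr, Matrix.mul_assoc]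
  have hY : Y * Yᴴ = (t * r)ᴴ * (t * r) :=
    calc Y * Yᴴ = r * (Vᴴ * (s * s) * V) * r := by
          simp only [Y, conjTranspose_mul, conjTranspose_conjTranspose, hs, hr, Matrix.mul_assoc]
      _ = (t * r)ᴴ * (t * r) := by
          rw [hss, show Vᴴ * ρ * V = t * t from htt.symm]
          simp only [conjTranspose_mul, hr, ht, Matrix.mul_assoc]
  have htr : (t * r) * (t * r)ᴴ = t * τ * t := by
    rw [← hrr]; simp only [conjTranspose_mul, hr, ht, Matrix.mul_assoc]
  have hZZ : t * Z * t = Z * Z := by rw [← htt]; simp only [Matrix.mul_assoc]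
  have hbound : Z.trace.re ≤ (CFC.sqrt (Yᴴ * Y)).trace.re :=
    calc Z.trace.re = (CFC.sqrt (t * Z * t)).trace.re := by rw [hZZ, CFC.sqrt_mul_self Z hZ]
      _ ≤ (CFC.sqrt (t * τ * t)).trace.re :=
        re_trace_le_re_trace (CFC.sqrt_le_sqrt _ _ (IsSelfAdjoint.conjugate_le_conjugate hτ ht))
      _ = (CFC.sqrt (Yᴴ * Y)).trace.re := by
        rw [← htr, ← trace_sqrt_conjTranspose_mul_self, ← hY, trace_sqrt_conjTranspose_mul_self]
  rw [fidelity, matSqrt_eq_sqrt hρ, hσ, matSqrt_eq_sqrt (posSemidef_conjTranspose_mul_self Y)]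
  exact pow_le_pow_left₀ (Complex.le_def.mp (hρ.conjTranspose_mul_mul_same V).trace_nonneg).1
    hbound 2

open NNReal in
lemma fidelity_vecMulVec_star {M : Matrix ι ι ℂ} (hM : M.PosSemidef) (φ : ι → ℂ) :
    fidelity M (vecMulVec φ (star φ)) = (star φ ⬝ᵥ M *ᵥ φ).re := by
  set s := CFC.sqrt M
  have hs : sᴴ = s := (CFC.sqrt_nonneg M).isSelfAdjoint
  have hss : s * s = M := CFC.sqrt_mul_sqrt_self M hM.nonneg
  set Y := replicateRow Unit (star φ) * s
  have hσ : s * vecMulVec φ (star φ) * s = Yᴴ * Y := by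
    simp only [Y, conjTranspose_mul, conjTranspose_replicateRow, star_star, hs, vecMulVec_eq Unit,
      Matrix.mul_assoc]
  set c := star φ ⬝ᵥ M *ᵥ φ
  have hc : 0 ≤ c.re := (Complex.le_def.mp (hM.dotProduct_mulVec_nonneg φ)).1
  have hYY : Y * Yᴴ = algebraMap ℝ≥0 (Matrix Unit Unit ℂ) c.re.toNNReal := by
    have hcre : c = c.re := Complex.eq_re_of_ofReal_le (hM.dotProduct_mulVec_nonneg φ)
    calc Y * Yᴴ = replicateRow Unit (star φ) * replicateCol Unit (M *ᵥ φ) := by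
          simp only [Y, conjTranspose_mul, conjTranspose_replicateRow, star_star, hs,
            replicateCol_mulVec, ← hss, Matrix.mul_assoc]
      _ = algebraMap ℝ≥0 (Matrix Unit Unit ℂ) c.re.toNNReal := by
          ext
          simp [algebraMap_eq_diagonal, IsScalarTower.algebraMap_apply ℝ≥0 ℝ ℂ,
            Real.coe_toNNReal _ hc, ← hcre, c]
  rw [fidelity, matSqrt_eq_sqrt hM, hσ, matSqrt_eq_sqrt (posSemidef_conjTranspose_mul_self Y),
    trace_sqrt_conjTranspose_mul_self, hYY, CFC.sqrt_algebraMap]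
  simp [algebraMap_eq_diagonal, IsScalarTower.algebraMap_apply ℝ≥0 ℝ ℂ, hc]

end Fidelity

namespace Matrix

variable {A : Type*} (E : Type*) [DecidableEq E]

def tensorOne (u : A → ℂ) : Matrix (A × E) E ℂ := of fun p e => if p.2 = e then u p.1 else 0

lemma tensorOne_sub (u v : A → ℂ) : tensorOne E (u - v) = tensorOne E u - tensorOne E v := by
  ext p e; by_cases h : p.2 = e <;> simp [tensorOne, h]

lemma tensorOne_smul (c : ℂ) (u : A → ℂ) : tensorOne E (c • u) = c • tensorOne E u := by
  ext; simp [tensorOne]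

lemma tensorOne_sum {ι : Type*} (s : Finset ι) (u : ι → A → ℂ) :
    tensorOne E (∑ i ∈ s, u i) = ∑ i ∈ s, tensorOne E (u i) := by
  ext; simp [tensorOne, Finset.sum_apply, Matrix.sum_apply, Finset.sum_ite_irrel]

variable {E}

lemma vecMulVec_star_kronecker [Fintype E] (u v : A → ℂ) (M : Matrix E E ℂ) :
    vecMulVec u (star v) ⊗ₖ M = tensorOne E u * M * (tensorOne E v)ᴴ := by
  ext p q
  simp only [kroneckerMap_apply, vecMulVec_apply, Pi.star_apply, RCLike.star_def, tensorOne,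
    mul_apply, of_apply, ite_mul, zero_mul, Finset.sum_ite_eq, Finset.mem_univ, ↓reduceIte,
    conjTranspose_apply, apply_ite, star_zero, mul_zero]
  ring

variable [Fintype A] [Fintype E]

def partialTraceFst {R : Type*} [AddCommMonoid R] (ρ : Matrix (A × E) (A × E) R) :
    Matrix E E R :=
  of fun e e' => ∑ a, ρ (a, e) (a, e')

def partialTraceSnd {R : Type*} [AddCommMonoid R] (ρ : Matrix (A × E) (A × E) R) :
    Matrix A A R :=
  of fun a a' => ∑ e, ρ (a, e) (a', e)

lemma partialTraceFst_eq_sum [DecidableEq A] (ρ : Matrix (A × E) (A × E) ℂ) :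
    partialTraceFst ρ =
      ∑ a : A, (tensorOne E (Pi.single a (1 : ℂ)))ᴴ * ρ * tensorOne E (Pi.single a (1 : ℂ)) := by
  ext e e'
  simp [partialTraceFst, tensorOne, mul_apply, Matrix.sum_apply, Fintype.sum_prod_type,
    Pi.single_apply, apply_ite (starRingEnd ℂ)]

lemma dotProduct_partialTraceSnd_mulVec (ρ : Matrix (A × E) (A × E) ℂ) (φ : A → ℂ) :
    star φ ⬝ᵥ partialTraceSnd ρ *ᵥ φ = ((tensorOne E φ)ᴴ * ρ * tensorOne E φ).trace := by
  simp only [dotProduct, Pi.star_apply, RCLike.star_def, mulVec, partialTraceSnd, of_apply,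
    Finset.sum_mul, Finset.mul_sum, trace, tensorOne, diag_apply, mul_apply, conjTranspose_apply,
    apply_ite (starRingEnd ℂ), map_zero, ite_mul, zero_mul, Fintype.sum_prod_type,
    Finset.sum_ite_eq', Finset.mem_univ, ↓reduceIte, mul_ite, mul_zero]
  rw [Finset.sum_comm_cycle]
  refine Finset.sum_congr rfl fun e _ => ?_
  rw [Finset.sum_comm]
  simp only [mul_assoc]

lemma PosSemidef.partialTraceSnd {ρ : Matrix (A × E) (A × E) ℂ} (hρ : ρ.PosSemidef) :
    (partialTraceSnd ρ).PosSemidef := by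
  refine .of_dotProduct_mulVec_nonneg ?_ fun φ => ?_
  · ext a a'
    simp [Matrix.partialTraceSnd, star_sum, hρ.isHermitian.apply]
  · rw [dotProduct_partialTraceSnd_mulVec]
    exact (hρ.conjTranspose_mul_mul_same _).trace_nonneg

lemma conjTranspose_tensorOne_mul_mul_le_partialTraceFst [DecidableEq A]
    {ρ : Matrix (A × E) (A × E) ℂ} (hρ : ρ.PosSemidef) {φ : A → ℂ} (hφ : star φ ⬝ᵥ φ = 1) :
    (tensorOne E φ)ᴴ * ρ * tensorOne E φ ≤ partialTraceFst ρ := by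
  set V := tensorOne E φ
  set T : A → Matrix (A × E) E ℂ := fun a => tensorOne E (Pi.single a 1)
  set K : A → Matrix (A × E) E ℂ := fun a => tensorOne E (Pi.single a 1 - star (φ a) • φ)
  have hV : V = ∑ a, φ a • T a := by
    simp only [V, T, ← tensorOne_smul, ← tensorOne_sum, ← pi_eq_sum_univ']
  have hnorm : ∑ a, φ a * star (φ a) = 1 := by
    rw [← hφ]; simp [dotProduct, mul_comm]
  have hsquare : ∀ a, (K a)ᴴ * ρ * K a = (T a)ᴴ * ρ * T a - star (φ a) • ((T a)ᴴ * ρ * V)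
      - φ a • (Vᴴ * ρ * T a) + (φ a * star (φ a)) • (Vᴴ * ρ * V) := by
    intro a
    simp only [K, T, V, tensorOne_sub, tensorOne_smul, conjTranspose_sub, conjTranspose_smul,
      star_star, Matrix.sub_mul, Matrix.mul_sub, Matrix.smul_mul, Matrix.mul_smul]
    module
  have hleft : ∑ a, star (φ a) • ((T a)ᴴ * ρ * V) = Vᴴ * ρ * V := by
    simp only [hV, conjTranspose_sum, conjTranspose_smul, Matrix.sum_mul, Matrix.smul_mul]
  have hright : ∑ a, φ a • (Vᴴ * ρ * T a) = Vᴴ * ρ * V := by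
    simp only [← Matrix.mul_smul, ← Matrix.mul_sum, ← hV]
  have hdiag : ∑ a, (φ a * star (φ a)) • (Vᴴ * ρ * V) = Vᴴ * ρ * V := by
    rw [← Finset.sum_smul, hnorm, one_smul]
  have hdiff : partialTraceFst ρ - Vᴴ * ρ * V = ∑ a, (K a)ᴴ * ρ * K a := by
    rw [partialTraceFst_eq_sum, Finset.sum_congr rfl fun a _ => hsquare a, Finset.sum_add_distrib,
      Finset.sum_sub_distrib, Finset.sum_sub_distrib, hleft, hright, hdiag]
    abel
  rw [Matrix.le_iff, hdiff]
  exact posSemidef_sum _ fun a _ => hρ.conjTranspose_mul_mul_same _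

end Matrix

theorem statement4_general {A E : Type*} [Fintype A] [DecidableEq A]
    [Fintype E] [DecidableEq E]
    (ρ : Matrix (A × E) (A × E) ℂ) (hρ : ρ.PosSemidef)
    (φ : A → ℂ) (hφ : ∑ a, Complex.normSq (φ a) = 1) :
    (fidelity (Matrix.of fun a a' : A => ∑ e, ρ (a, e) (a', e))
        (Matrix.vecMulVec φ (star φ))) ^ 2
      ≤ fidelity ρ
          ((Matrix.vecMulVec φ (star φ)) ⊗ₖ
            (Matrix.of fun e e' : E => ∑ a, ρ (a, e) (a, e'))) := by
  change fidelity (partialTraceSnd ρ) _ ^ 2 ≤ fidelity ρ (_ ⊗ₖ partialTraceFst ρ)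
  have hunit : star φ ⬝ᵥ φ = 1 := by
    simp only [dotProduct, Pi.star_apply, Complex.star_def, ← Complex.normSq_eq_conj_mul_self]
    exact_mod_cast hφ
  rw [fidelity_vecMulVec_star hρ.partialTraceSnd, dotProduct_partialTraceSnd_mulVec,
    vecMulVec_star_kronecker]
  exact sq_re_trace_le_fidelity hρ _ (conjTranspose_tensorOne_mul_mul_le_partialTraceFst hρ hunit)

/-- **Lemma 1 of the paper.** For a bipartite state `ρ` on `A × E` with marginals `ρ_A`,
`ρ_E`, and any unit vector `φ` on `A`,
`F(ρ, P_φ ⊗ ρ_E) ≥ (F(ρ_A, P_φ))²` where `P_φ` is the rank-one projection onto `φ`. -/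
theorem statement4 {A E : Type*} [Fintype A] [DecidableEq A] [Nonempty A]
    [Fintype E] [DecidableEq E] [Nonempty E]
    (ρ : Matrix (A × E) (A × E) ℂ) (hρ : ρ.PosSemidef) (htr : ρ.trace = 1)
    (φ : A → ℂ) (hφ : ∑ a, Complex.normSq (φ a) = 1) :
    (fidelity (Matrix.of fun a a' : A => ∑ e, ρ (a, e) (a', e))
        (Matrix.vecMulVec φ (star φ))) ^ 2
      ≤ fidelity ρ
          ((Matrix.vecMulVec φ (star φ)) ⊗ₖ
            (Matrix.of fun e e' : E => ∑ a, ρ (a, e) (a, e'))) :=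
  statement4_general ρ hρ φ hφ
end

section
/- Fix reals μ_S > μ_D > 0 and positive reals p_S, p_D, p_V. For n ∈ ℕ set P_S(n) := e^{−μ_S}·μ_S^n/n!, P_D(n) := e^{−μ_D}·μ_D^n/n!, P_V(n) := 1 if n = 0 and 0 otherwise, p^{int}(n) := p_S·P_S(n) + p_D·P_D(n) + p_V·P_V(n), and for ω ∈ {S,D,V} set p^{int}_{ω|n} := p_ω·P_ω(n)/p^{int}(n) and p^{int}_{ω,0} := p_ω·P_ω(0). Let q : ℕ → ℝ satisfy q(n) ≥ 0 for all n and Σ_n q(n) ≤ 1 (the series converging), and set q_ω := Σ'_n p^{int}_{ω|n}·q(n). Define Δ := −(μ_D²/μ_S²)·p^{int}_{S|1}/p^{int}_{S,0} + p^{int}_{D|1}/p^{int}_{D,0} − p^{int}_{V|1}/p^{int}_{V,0}, and λ := −Δ^{−1}·(μ_D²/μ_S²)/p^{int}_{S,0}, ζ := Δ^{−1}/p^{int}_{D,0}, γ := −Δ^{−1}/p^{int}_{V,0}. Then λ ≤ 0, ζ ≥ 0, γ ≤ 0, and q(1) ≥ λ·q_S + ζ·q_D + γ·q_V. (Proposition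 5: decoy-state lower bound on the single-photon detection probability.) -/
/-!
Write `A n := λ c_S(n) + ζ c_D(n) + γ c_V(n)`, so that `λ q_S + ζ q_D + γ q_V = ∑ A n q n`.
By construction `A n = Δ⁻¹ D n`, where
`D n := -(μ_D/μ_S)² c_S(n)/p_{S,0} + c_D(n)/p_{D,0} - c_V(n)/p_{V,0}` and `Δ = D 1`; hence `A 1 = 1`.
Cancelling the exponentials gives `p^{int}(n) D n = (μ_D^n - (μ_D/μ_S)² μ_S^n)/n! - [n = 0]`
(`decoyBracket`), which is positive at `n = 1` and nonpositive elsewhere since `μ_D ≤ μ_S`.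
So `A n ≤ 0` for `n ≠ 1`, and as `q ≥ 0` the sum is at most `q 1`.
-/

lemma pow_mul_sq_le_sq_mul_pow {R : Type*} [CommSemiring R] [PartialOrder R] [IsOrderedRing R]
    {a b : R} (ha : 0 ≤ a) (hab : a ≤ b) {n : ℕ} (hn : 2 ≤ n) :
    a ^ n * b ^ 2 ≤ a ^ 2 * b ^ n := by
  obtain ⟨m, rfl⟩ := Nat.exists_eq_add_of_le' hn
  calc a ^ (m + 2) * b ^ 2 = a ^ 2 * b ^ 2 * a ^ m := by ring
    _ ≤ a ^ 2 * b ^ 2 * b ^ m :=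
      mul_le_mul_of_nonneg_left (pow_le_pow_left₀ ha hab m)
        (mul_nonneg (pow_nonneg ha 2) (pow_nonneg (ha.trans hab) 2))
    _ = a ^ 2 * b ^ (m + 2) := by ring

lemma summable_div_mul_of_le {ι : Type*} {w t q : ι → ℝ} (hq : ∀ i, 0 ≤ q i)
    (hqs : Summable q) (hw : ∀ i, 0 ≤ w i) (hwt : ∀ i, w i ≤ t i) :
    Summable fun i => w i / t i * q i :=
  hqs.of_nonneg_of_le (fun i => mul_nonneg (div_nonneg (hw i) ((hw i).trans (hwt i))) (hq i))
    fun i => mul_le_of_le_one_left (hq i) (div_le_one_of_le₀ (hwt i) ((hw i).trans (hwt i)))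

lemma le_of_hasSum_mul_of_nonpos_of_ne {ι : Type*} [DecidableEq ι] {a q : ι → ℝ} {s : ℝ} {k : ι}
    (hs : HasSum (fun i => a i * q i) s) (hq : ∀ i, 0 ≤ q i) (hk : a k ≤ 1)
    (ha : ∀ i ≠ k, a i ≤ 0) : s ≤ q k := by
  refine hasSum_le (fun i => ?_) hs (hasSum_ite_eq k (q k))
  split_ifs with h
  · subst h; exact mul_le_of_le_one_left (hq i) hk
  · exact mul_nonpos_of_nonpos_of_nonneg (ha i h) (hq i)

noncomputable def poissonWeight (μ : ℝ) (n : ℕ) : ℝ := Real.exp (-μ) * μ ^ n / n.factorial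

lemma poissonWeight_pos {μ : ℝ} (hμ : 0 < μ) (n : ℕ) : 0 < poissonWeight μ n := by
  unfold poissonWeight
  positivity

noncomputable def decoyBracket (μS μD : ℝ) (n : ℕ) : ℝ :=
  (μD ^ n - μD ^ 2 / μS ^ 2 * μS ^ n) / n.factorial - if n = 0 then 1 else 0

lemma decoyBracket_one_pos {μS μD : ℝ} (hμD : 0 < μD) (hμSD : μD < μS) :
    0 < decoyBracket μS μD 1 := by
  have hμS : 0 < μS := hμD.trans hμSD
  have h : decoyBracket μS μD 1 = μD * (μS - μD) / μS := by
    simp only [decoyBracket, Nat.factorial_one, Nat.cast_one, div_one, one_ne_zero, if_false,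
      sub_zero, pow_one]
    field_simp
  rw [h]
  exact div_pos (mul_pos hμD (sub_pos.mpr hμSD)) hμS

lemma decoyBracket_nonpos {μS μD : ℝ} (hμD : 0 < μD) (hμSD : μD ≤ μS) {n : ℕ} (hn : n ≠ 1) :
    decoyBracket μS μD n ≤ 0 := by
  have hμS : 0 < μS := hμD.trans_le hμSD
  obtain rfl | hn₂ : n = 0 ∨ 2 ≤ n := by omega
  · simp only [decoyBracket, pow_zero, Nat.factorial_zero, Nat.cast_one, div_one, if_true]
    have : 0 ≤ μD ^ 2 / μS ^ 2 := by positivity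
    linarith
  · have hnum : μD ^ n ≤ μD ^ 2 / μS ^ 2 * μS ^ n := by
      rw [div_mul_eq_mul_div, le_div_iff₀ (by positivity)]
      exact pow_mul_sq_le_sq_mul_pow hμD.le hμSD hn₂
    simp only [decoyBracket, if_neg (by omega : n ≠ 0), sub_zero]
    exact div_nonpos_of_nonpos_of_nonneg (by linarith) (by positivity)

lemma decoy_combination_eq {μS μD pS pD pV : ℝ} (hpS : pS ≠ 0) (hpD : pD ≠ 0) (hpV : pV ≠ 0)
    (t : ℝ) (n : ℕ) :
    -(μD ^ 2 / μS ^ 2) * (pS * poissonWeight μS n / t / (pS * poissonWeight μS 0))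
      + pD * poissonWeight μD n / t / (pD * poissonWeight μD 0)
      - pV * (if n = 0 then 1 else 0) / t / (pV * if 0 = 0 then 1 else 0)
      = decoyBracket μS μD n / t := by
  simp only [poissonWeight, decoyBracket]
  split_ifs <;> field_simp <;> ring

theorem statement5_general (μS μD pS pD pV : ℝ) (hμSD : μD < μS) (hμD : 0 < μD)
    (hpS : 0 < pS) (hpD : 0 < pD) (hpV : 0 < pV)
    (q : ℕ → ℝ) (hq : ∀ n, 0 ≤ q n) (hqsum : Summable q) :
    let PS : ℕ → ℝ := fun n => Real.exp (-μS) * μS ^ n / n.factorial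
    let PD : ℕ → ℝ := fun n => Real.exp (-μD) * μD ^ n / n.factorial
    let PV : ℕ → ℝ := fun n => if n = 0 then 1 else 0
    let pint : ℕ → ℝ := fun n => pS * PS n + pD * PD n + pV * PV n
    let cS : ℕ → ℝ := fun n => pS * PS n / pint n
    let cD : ℕ → ℝ := fun n => pD * PD n / pint n
    let cV : ℕ → ℝ := fun n => pV * PV n / pint n
    let pS0 : ℝ := pS * PS 0
    let pD0 : ℝ := pD * PD 0
    let pV0 : ℝ := pV * PV 0
    let qS : ℝ := ∑' n, cS n * q n
    let qD : ℝ := ∑' n, cD n * q n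
    let qV : ℝ := ∑' n, cV n * q n
    let Δ : ℝ := -(μD ^ 2 / μS ^ 2) * (cS 1 / pS0) + cD 1 / pD0 - cV 1 / pV0
    let lam : ℝ := -(Δ⁻¹ * ((μD ^ 2 / μS ^ 2) / pS0))
    let ζ : ℝ := Δ⁻¹ / pD0
    let γ : ℝ := -(Δ⁻¹ / pV0)
    lam ≤ 0 ∧ 0 ≤ ζ ∧ γ ≤ 0 ∧ lam * qS + ζ * qD + γ * qV ≤ q 1 := by
  intro PS PD PV pint cS cD cV pS0 pD0 pV0 qS qD qV Δ lam ζ γ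
  have hμS : 0 < μS := hμD.trans hμSD
  have hwS : ∀ n, 0 < pS * PS n := fun n => mul_pos hpS (poissonWeight_pos hμS n)
  have hwD : ∀ n, 0 < pD * PD n := fun n => mul_pos hpD (poissonWeight_pos hμD n)
  have hwV : ∀ n, 0 ≤ pV * PV n := fun n => mul_nonneg hpV.le (by positivity)
  have hpint : ∀ n, 0 < pint n := fun n =>
    add_pos_of_pos_of_nonneg (add_pos (hwS n) (hwD n)) (hwV n)
  have hcomb : ∀ n, -(μD ^ 2 / μS ^ 2) * (cS n / pS0) + cD n / pD0 - cV n / pV0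
      = decoyBracket μS μD n / pint n :=
    fun n => decoy_combination_eq hpS.ne' hpD.ne' hpV.ne' (pint n) n
  have hΔ : 0 < Δ := (div_pos (decoyBracket_one_pos hμD hμSD) (hpint 1)).trans_eq (hcomb 1).symm
  have hsum : ∀ w : ℕ → ℝ, (∀ n, 0 ≤ w n) → (∀ n, w n ≤ pint n) →
      HasSum (fun n => w n / pint n * q n) (∑' n, w n / pint n * q n) :=
    fun w hw hwt => (summable_div_mul_of_le hq hqsum hw hwt).hasSum
  have hqS := hsum _ (fun n => (hwS n).le) fun n =>
    le_add_of_le_of_nonneg (le_add_of_nonneg_right (hwD n).le) (hwV n)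
  have hqD := hsum _ (fun n => (hwD n).le) fun n =>
    le_add_of_le_of_nonneg (le_add_of_nonneg_left (hwS n).le) (hwV n)
  have hqV := hsum _ hwV fun n => le_add_of_nonneg_left (add_nonneg (hwS n).le (hwD n).le)
  have hmix : HasSum (fun n => Δ⁻¹ * (decoyBracket μS μD n / pint n) * q n)
      (lam * qS + ζ * qD + γ * qV) :=
    (((hqS.mul_left lam).add (hqD.mul_left ζ)).add (hqV.mul_left γ)).congr_fun fun n => by
      rw [← hcomb]
      simp only [lam, ζ, γ]
      ring
  refine ⟨neg_nonpos.mpr (by positivity), by positivity, neg_nonpos.mpr (by positivity),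
    le_of_hasSum_mul_of_nonpos_of_ne hmix hq ?_ fun n hn => ?_⟩
  · rw [← hcomb 1]
    exact (inv_mul_cancel₀ hΔ.ne').le
  · exact mul_nonpos_of_nonneg_of_nonpos (inv_nonneg.mpr hΔ.le)
      (div_nonpos_of_nonpos_of_nonneg (decoyBracket_nonpos hμD hμSD.le hn) (hpint n).le)

/-- **Proposition 5 (decoy-state lower bound on the single-photon detection probability).**
With signal/decoy/vacuum Poisson photon-number distributions, the single-photon detection
probability `q 1` is lower bounded by the linear combination
`λ·q_S + ζ·q_D + γ·q_V` with `λ ≤ 0`, `ζ ≥ 0`, `γ ≤ 0`. -/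
theorem statement5 (μS μD pS pD pV : ℝ) (hμSD : μD < μS) (hμD : 0 < μD)
    (hpS : 0 < pS) (hpD : 0 < pD) (hpV : 0 < pV)
    (q : ℕ → ℝ) (hq : ∀ n, 0 ≤ q n) (hqsum : Summable q) (hq1 : ∑' n, q n ≤ 1) :
    let PS : ℕ → ℝ := fun n => Real.exp (-μS) * μS ^ n / n.factorial
    let PD : ℕ → ℝ := fun n => Real.exp (-μD) * μD ^ n / n.factorial
    let PV : ℕ → ℝ := fun n => if n = 0 then 1 else 0
    let pint : ℕ → ℝ := fun n => pS * PS n + pD * PD n + pV * PV n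
    let cS : ℕ → ℝ := fun n => pS * PS n / pint n
    let cD : ℕ → ℝ := fun n => pD * PD n / pint n
    let cV : ℕ → ℝ := fun n => pV * PV n / pint n
    let pS0 : ℝ := pS * PS 0
    let pD0 : ℝ := pD * PD 0
    let pV0 : ℝ := pV * PV 0
    let qS : ℝ := ∑' n, cS n * q n
    let qD : ℝ := ∑' n, cD n * q n
    let qV : ℝ := ∑' n, cV n * q n
    let Δ : ℝ := -(μD ^ 2 / μS ^ 2) * (cS 1 / pS0) + cD 1 / pD0 - cV 1 / pV0
    let lam : ℝ := -(Δ⁻¹ * ((μD ^ 2 / μS ^ 2) / pS0))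
    let ζ : ℝ := Δ⁻¹ / pD0
    let γ : ℝ := -(Δ⁻¹ / pV0)
    lam ≤ 0 ∧ 0 ≤ ζ ∧ γ ≤ 0 ∧ lam * qS + ζ * qD + γ * qV ≤ q 1 :=
  statement5_general μS μD pS pD pV hμSD hμD hpS hpD hpV q hq hqsum
end

section
/- Fix reals μ_S > μ_D > 0 and positive reals p_S, p_D, p_V. For n ∈ ℕ set P_S(n) := e^{−μ_S}·μ_S^n/n!, P_D(n) := e^{−μ_D}·μ_D^n/n!, P_V(n) := 1 if n = 0 and 0 otherwise, p^{int}(n) := p_S·P_S(n) + p_D·P_D(n) + p_V·P_V(n), and for ω ∈ {S,D,V} set p^{int}_{ω|n} := p_ω·P_ω(n)/p^{int}(n) and p^{int}_{ω,0} := p_ω·P_ω(0). Then −(μ_D²/μ_S²)·p^{int}_{S|1}/p^{int}_{S,0} + p^{int}_{D|1}/p^{int}_{D,0} − p^{int}_{V|1}/p^{int}_{V,0} = μ_D·(μ_S − μ_D)/(μ_S·p^{int}(1)), and in particular this quantity is strictly positive. (The prefactor computation in the proof of Proposition 5.) -/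
/-- **The prefactor computation in the proof of Proposition 5.**
`−(μ_D²/μ_S²)·p_{S|1}/p_{S,0} + p_{D|1}/p_{D,0} − p_{V|1}/p_{V,0}
  = μ_D(μ_S − μ_D)/(μ_S · p^{int}(1)) > 0`. -/
theorem statement6 (μS μD pS pD pV : ℝ) (hμSD : μD < μS) (hμD : 0 < μD)
    (hpS : 0 < pS) (hpD : 0 < pD) (hpV : 0 < pV) :
    let PS : ℕ → ℝ := fun n => Real.exp (-μS) * μS ^ n / n.factorial
    let PD : ℕ → ℝ := fun n => Real.exp (-μD) * μD ^ n / n.factorial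
    let PV : ℕ → ℝ := fun n => if n = 0 then 1 else 0
    let pint : ℕ → ℝ := fun n => pS * PS n + pD * PD n + pV * PV n
    let cS : ℕ → ℝ := fun n => pS * PS n / pint n
    let cD : ℕ → ℝ := fun n => pD * PD n / pint n
    let cV : ℕ → ℝ := fun n => pV * PV n / pint n
    (-(μD ^ 2 / μS ^ 2) * (cS 1 / (pS * PS 0)) + cD 1 / (pD * PD 0) - cV 1 / (pV * PV 0)
        = μD * (μS - μD) / (μS * pint 1))
      ∧ 0 < μD * (μS - μD) / (μS * pint 1) := by
  intro PS PD PV pint cS cD cV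
  have hμS : 0 < μS := hμD.trans hμSD
  have heS : 0 < Real.exp (-μS) := Real.exp_pos _
  have heD : 0 < Real.exp (-μD) := Real.exp_pos _
  have hpint1 : 0 < pint 1 := by
    simp only [pint, PS, PD, PV]
    norm_num
    positivity
  have hPS0 : PS 0 = Real.exp (-μS) := by simp [PS]
  have hPD0 : PD 0 = Real.exp (-μD) := by simp [PD]
  have hPS1 : PS 1 = Real.exp (-μS) * μS := by simp [PS]
  have hPD1 : PD 1 = Real.exp (-μD) * μD := by simp [PD]
  have hPV1 : PV 1 = 0 := by simp [PV]
  constructor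
  · simp only [cS, cD, cV, hPS0, hPD0, hPS1, hPD1, hPV1]
    field_simp
    ring
  · exact div_pos (mul_pos hμD (sub_pos.mpr hμSD)) (mul_pos hμS hpint1)
end

section
/- Fix reals μ_S > μ_D > 0 and positive reals p_S, p_D, p_V. For n ∈ ℕ set P_S(n) := e^{−μ_S}·μ_S^n/n!, P_D(n) := e^{−μ_D}·μ_D^n/n!, P_V(n) := 1 if n = 0 and 0 otherwise, p^{int}(n) := p_S·P_S(n) + p_D·P_D(n) + p_V·P_V(n), and for ω ∈ {S,D,V} set p^{int}_{ω|n} := p_ω·P_ω(n)/p^{int}(n). Let q : ℕ → ℝ satisfy q(n) ≥ 0 for all n and Σ_n q(n) ≤ 1 (the series converging), and set q_ω := Σ'_n p^{int}_{ω|n}·q(n). Then q(1) ≤ q_D/p^{int}_{D|1} − (p^{int}_{D|0}/(p^{int}_{D|1}·p^{int}_{V|0}))·q_V. (Proposition 7: decoy-state upper bound on the single-photon error detection probability.) -/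
/-- **Proposition 7 (decoy-state upper bound on the single-photon error detection
probability).** `q 1 ≤ q_D/p_{D|1} − (p_{D|0}/(p_{D|1}·p_{V|0}))·q_V`. -/
theorem statement7 (μS μD pS pD pV : ℝ) (hμSD : μD < μS) (hμD : 0 < μD)
    (hpS : 0 < pS) (hpD : 0 < pD) (hpV : 0 < pV)
    (q : ℕ → ℝ) (hq : ∀ n, 0 ≤ q n) (hqsum : Summable q) (hq1 : ∑' n, q n ≤ 1) :
    let PS : ℕ → ℝ := fun n => Real.exp (-μS) * μS ^ n / n.factorial
    let PD : ℕ → ℝ := fun n => Real.exp (-μD) * μD ^ n / n.factorial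
    let PV : ℕ → ℝ := fun n => if n = 0 then 1 else 0
    let pint : ℕ → ℝ := fun n => pS * PS n + pD * PD n + pV * PV n
    let cS : ℕ → ℝ := fun n => pS * PS n / pint n
    let cD : ℕ → ℝ := fun n => pD * PD n / pint n
    let cV : ℕ → ℝ := fun n => pV * PV n / pint n
    let qD : ℝ := ∑' n, cD n * q n
    let qV : ℝ := ∑' n, cV n * q n
    q 1 ≤ qD / cD 1 - (cD 0 / (cD 1 * cV 0)) * qV := by
  intro PS PD PV pint cS cD cV qD qV
  have hμS : 0 < μS := hμD.trans hμSD
  have hPS : ∀ n, 0 < PS n := fun n => by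
    simp only [PS]; positivity
  have hPD : ∀ n, 0 < PD n := fun n => by
    simp only [PD]; positivity
  have hPV : ∀ n, 0 ≤ PV n := fun n => by
    simp only [PV]; split <;> norm_num
  have hpint : ∀ n, 0 < pint n := fun n => by
    have := hPS n; have := hPD n; have := hPV n
    simp only [pint]; nlinarith
  have hcDpos : ∀ n, 0 < cD n := fun n => by
    have := hPD n; have := hpint n
    simp only [cD]; positivity
  have hcDle : ∀ n, cD n ≤ 1 := fun n => by
    have h1 := hPS n; have h2 := hPV n; have h3 := hpint n
    simp only [cD, pint] at *
    rw [div_le_one h3]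
    nlinarith
  have hcVn : ∀ n, n ≠ 0 → cV n = 0 := fun n hn => by
    simp only [cV, PV, if_neg hn]; ring
  have hcV0 : 0 < cV 0 := by
    have hP : PV 0 = 1 := by simp only [PV, if_pos rfl]
    simp only [cV, hP, mul_one]
    exact div_pos hpV (hpint 0)
  -- summability of cD n * q n
  have hsumD : Summable (fun n => cD n * q n) := by
    apply Summable.of_nonneg_of_le (fun n => by
      have := (hcDpos n).le; have := hq n; positivity)
      (fun n => by
        have := hcDle n; have := hq n; nlinarith) hqsum
  -- qV value
  have hqV : qV = cV 0 * q 0 := by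
    simp only [qV]
    exact tsum_eq_single 0 (fun n hn => by rw [hcVn n hn]; ring)
  -- qD lower bound
  have hqD : cD 0 * q 0 + cD 1 * q 1 ≤ qD := by
    have h := Summable.sum_le_tsum ({0, 1} : Finset ℕ)
      (fun n _ => by have := (hcDpos n).le; have := hq n; positivity) hsumD
    simpa using h
  have h1 : cD 0 ≠ 0 := (hcDpos 0).ne'
  have h2 : 0 < cD 1 := hcDpos 1
  have h3 : cV 0 ≠ 0 := hcV0.ne'
  have key : (cD 0 / (cD 1 * cV 0)) * (cV 0 * q 0) = cD 0 * q 0 / cD 1 := by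
    field_simp
  rw [hqV, key, le_sub_iff_add_le]
  have h4 : (cD 0 * q 0 + cD 1 * q 1) / cD 1 ≤ qD / cD 1 := by gcongr
  have h5 : (cD 0 * q 0 + cD 1 * q 1) / cD 1 = q 1 + cD 0 * q 0 / cD 1 := by
    field_simp
    ring
  linarith [h5 ▸ h4]
end
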